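/- arXiv:1705.04834 — 3 statements merged into one kernel-verified Lean document; each statement's English description precedes it below -/
import Mathlib

section
/- (Vanishing of bidifferential operators.) Let (m_{ij})_{i,j≥0} be a family of elements of K with only finitely many nonzero, and let W ⊆ K be a ℂ-subspace which is infinite-dimensional over ℂ. If Σ_{i,j} m_{ij} F^{(i)} G^{(j)} = 0 for all F ∈ K and all G ∈ W, then m_{ij} = 0 for all i, j. -/
noncomputable section

open scoped BigOperators

/-- The field `K`: fraction field of the polynomial algebra `ℂ[u₀,u₁,u₂,…]`. -/
abbrev KK : Type := FractionRing (MvPolynomial ℕ ℂ)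

/-- The generators `uₙ` of `K` (with `u = u₀`). -/
def uu (n : ℕ) : KK := algebraMap (MvPolynomial ℕ ℂ) KK (MvPolynomial.X n)

/-- `V = ℂ[u, u₁^{±1}, u₂, …]`, as a subalgebra of `K`. -/
def VV : Subalgebra ℂ KK := Algebra.adjoin ℂ (Set.range uu ∪ {(uu 1)⁻¹})

/-- Generalized binomial coefficient `C(m,k)` for `m : ℤ`. -/
def binc (m : ℤ) (k : ℕ) : ℚ := (∏ j ∈ Finset.range k, ((m : ℚ) - (j : ℚ))) / (k.factorial : ℚ)

/-- A pseudodifferential operator `Σ_{n ≤ N} aₙ ∂ⁿ` is encoded by its coefficient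
function `ℤ → K`; `IsPDO` says the support is bounded above. -/
def IsPDO (L : ℤ → KK) : Prop := ∃ N : ℤ, ∀ n : ℤ, N < n → L n = 0

/-- A differential operator: coefficients vanish in negative degrees and above some degree. -/
def IsDiffOp (L : ℤ → KK) : Prop := ∃ N : ℤ, ∀ n : ℤ, (n < 0 ∨ N < n) → L n = 0

/-- Multiplication of pseudodifferential operators (coefficients of `A∘B`), determined by
`∂^i ∘ a = Σ_k C(i,k) a^{(k)} ∂^{i-k}`. -/
def pmul (d : Derivation ℂ KK KK) (A B : ℤ → KK) : ℤ → KK :=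
  fun n => ∑ᶠ (i : ℤ), ∑ᶠ (k : ℕ), A i * ((binc i k : ℚ) : KK) * (⇑d)^[k] (B (n - i + k))

/-- Action of a differential operator `Σ pₙ∂ⁿ` on `f ∈ K`. -/
def papply (d : Derivation ℂ KK KK) (P : ℤ → KK) (f : KK) : KK :=
  ∑ᶠ (n : ℕ), P (n : ℤ) * (⇑d)^[n] f

/-- The formal adjoint `P* = Σ (−∂)ⁿ ∘ pₙ` of a pseudodifferential operator. -/
def padj (d : Derivation ℂ KK KK) (P : ℤ → KK) : ℤ → KK :=
  fun n => ∑ᶠ (k : ℕ), (-1 : KK) ^ (n + (k : ℤ)) * ((binc (n + (k : ℤ)) k : ℚ) : KK) *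
    (⇑d)^[k] (P (n + (k : ℤ)))

/-- The operator `∂^m` as a pseudodifferential operator. -/
def dpow (m : ℤ) : ℤ → KK := fun n => if n = m then 1 else 0

/-- The operator of multiplication by `a ∈ K`. -/
def mulOp (a : KK) : ℤ → KK := fun n => if n = 0 then a else 0

/-- `A` and `B` are right coprime: every common right divisor (in `K[∂]`) has order 0. -/
def RightCoprime (d : Derivation ℂ KK KK) (A B : ℤ → KK) : Prop :=
  ∀ D : ℤ → KK, IsDiffOp D →
    (∃ A₁ : ℤ → KK, IsDiffOp A₁ ∧ A = pmul d A₁ D) →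
    (∃ B₁ : ℤ → KK, IsDiffOp B₁ ∧ B = pmul d B₁ D) →
    ∀ n : ℤ, n ≠ 0 → D n = 0

/-- The variational derivative `δf/δu = D_f^*(1)`, where `DF f` is the Fréchet derivative
of `f`. -/
def vard (d : Derivation ℂ KK KK) (DF : KK → ℤ → KK) (f : KK) : KK :=
  papply d (padj d (DF f)) 1

/-- The Hamiltonian identity (14) for the pair `(A,B)`, `L = A∘B⁻¹`. -/
def HamIdent (d : Derivation ℂ KK KK) (DF : KK → ℤ → KK) (A B : ℤ → KK) : Prop :=
  ∀ F ∈ VV, ∀ G ∈ VV,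
    papply d (padj d A)
      (papply d (DF (papply d B F)) (papply d A G)
        + papply d (padj d (DF (papply d A G))) (papply d B F)
        - papply d (DF (papply d B G)) (papply d A F)
        + papply d (padj d (DF (papply d B G))) (papply d A F))
    = papply d (padj d B)
      (papply d (DF (papply d A G)) (papply d A F)
        - papply d (DF (papply d A F)) (papply d A G))

/-- `L` is a Hamiltonian operator: a skewadjoint rational operator `L = A∘B⁻¹`
(`A`, `B` right coprime) satisfying the identity (14) for all `F, G ∈ V`. -/
def IsHamiltonian (d : Derivation ℂ KK KK) (DF : KK → ℤ → KK) (L : ℤ → KK) : Prop :=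
  IsPDO L ∧ padj d L = -L ∧
    ∃ A B : ℤ → KK, IsDiffOp A ∧ IsDiffOp B ∧ B ≠ 0 ∧
      pmul d L B = A ∧ RightCoprime d A B ∧ HamIdent d DF A B

/-- `(d/du)^k P` evaluated at `u = u₀`. -/
def pev (P : Polynomial ℂ) (k : ℕ) : KK :=
  Polynomial.aeval (uu 0) ((⇑Polynomial.derivative)^[k] P)

/-- The right-hand side `G₁` of the Krichever–Novikov equation. -/
def GG1 (P : Polynomial ℂ) : KK :=
  uu 3 - (3/2 : KK) * (uu 2)^2 / uu 1 + pev P 0 / uu 1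

def GG2 (P : Polynomial ℂ) : KK :=
  uu 5 - 5 * uu 4 * uu 2 / uu 1 - (5/2 : KK) * (uu 3)^2 / uu 1
    + (25/2 : KK) * uu 3 * (uu 2)^2 / (uu 1)^2
    - (45/8 : KK) * (uu 2)^4 / (uu 1)^3
    - (5/3 : KK) * pev P 0 * uu 3 / (uu 1)^2
    + (25/6 : KK) * pev P 0 * (uu 2)^2 / (uu 1)^3
    - (5/3 : KK) * pev P 1 * uu 2 / uu 1
    - (5/18 : KK) * (pev P 0)^2 / (uu 1)^3
    + (5/9 : KK) * uu 1 * pev P 2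

def GG3 (P : Polynomial ℂ) : KK :=
  uu 7 - 7 * uu 2 * uu 6 / uu 1
    - (7/6 : KK) * (uu 5 / (uu 1)^2) * (2 * pev P 0 + 12 * uu 3 * uu 1 - 27 * (uu 2)^2)
    - (21/2 : KK) * (uu 4)^2 / uu 1
    + (21/2 : KK) * (uu 4 / (uu 1)^3) * (2 * pev P 0 - 11 * (uu 2)^2)
    - (7/3 : KK) * (uu 4 / (uu 1)^2) * (2 * pev P 1 * uu 1 - 51 * uu 2 * uu 3)
    + (49/2 : KK) * (uu 3)^3 / (uu 1)^2
    + (7/12 : KK) * ((uu 3)^2 / (uu 1)^3) * (22 * pev P 0 - 417 * (uu 2)^2)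
    + (2499/8 : KK) * ((uu 2)^4 / (uu 1)^4) * uu 3
    + (91/3 : KK) * pev P 1 * (uu 2 / (uu 1)^2) * uu 3
    - (595/6 : KK) * pev P 0 * ((uu 2)^2 / (uu 1)^4) * uu 3
    - (35/18 : KK) * (uu 3 / (uu 1)^4) * (2 * pev P 2 * (uu 1)^4 - (pev P 0)^2)
    - (1575/16 : KK) * (uu 2)^6 / (uu 1)^5
    + (1813/24 : KK) * ((uu 2)^4 / (uu 1)^5) * pev P 0
    - (203/6 : KK) * ((uu 2)^3 / (uu 1)^3) * pev P 1
    + (49/36 : KK) * ((uu 2)^2 / (uu 1)^5) * (6 * pev P 2 * (uu 1)^4 - 5 * (pev P 0)^2)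
    - (7/9 : KK) * (uu 2 / (uu 1)^3) * (2 * pev P 3 * (uu 1)^4 - 5 * pev P 0 * pev P 1)
    + (7/54 : KK) * (pev P 0)^3 / (uu 1)^5
    - (7/9 : KK) * pev P 2 * pev P 0 / uu 1
    + (7/9 : KK) * pev P 4 * (uu 1)^3
    - (7/18 : KK) * (pev P 1)^2 / uu 1

/-- `H₀ = u₁ ∘ ∂⁻¹ ∘ u₁`. -/
def H0 (d : Derivation ℂ KK KK) : ℤ → KK :=
  pmul d (mulOp (uu 1)) (pmul d (dpow (-1)) (mulOp (uu 1)))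

/-- `H₁`. -/
def H1 (d : Derivation ℂ KK KK) (P : Polynomial ℂ) : ℤ → KK :=
  (1/2 : KK) • (pmul d (mulOp ((uu 1)^2)) (dpow 3) + pmul d (dpow 3) (mulOp ((uu 1)^2)))
    + pmul d (mulOp (2 * uu 3 * uu 1 - (9/2 : KK) * (uu 2)^2 - (2/3 : KK) * pev P 0)) (dpow 1)
    + pmul d (dpow 1) (mulOp (2 * uu 3 * uu 1 - (9/2 : KK) * (uu 2)^2 - (2/3 : KK) * pev P 0))
    + pmul d (mulOp (GG1 P)) (pmul d (dpow (-1)) (mulOp (GG1 P)))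
    + pmul d (mulOp (uu 1)) (pmul d (dpow (-1)) (mulOp (GG2 P)))
    + pmul d (mulOp (GG2 P)) (pmul d (dpow (-1)) (mulOp (uu 1)))

/-- The coefficient `Q` appearing in `H₂`. -/
def QH2 (P : Polynomial ℂ) : KK :=
  uu 5 * uu 1 - 9 * uu 3 * uu 2 + (19/2 : KK) * (uu 3)^2
    - (2/3 : KK) * (uu 3 / uu 1) * (5 * pev P 0 - 39 * (uu 2)^2)
    + ((uu 2)^2 / (uu 1)^2) * (5 * pev P 0 - 9 * (uu 2)^2)
    + (2/3 : KK) * (pev P 0)^2 / (uu 1)^2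
    + (uu 1)^2 * pev P 2

/-- `H₂`. -/
def H2 (d : Derivation ℂ KK KK) (P : Polynomial ℂ) : ℤ → KK :=
  (1/2 : KK) • (pmul d (mulOp ((uu 1)^2)) (dpow 5) + pmul d (dpow 5) (mulOp ((uu 1)^2)))
    + pmul d (mulOp (3 * uu 3 * uu 1 - (19/2 : KK) * (uu 2)^2 - pev P 0)) (dpow 3)
    + pmul d (dpow 3) (mulOp (3 * uu 3 * uu 1 - (19/2 : KK) * (uu 2)^2 - pev P 0))
    + pmul d (mulOp (QH2 P)) (dpow 1) + pmul d (dpow 1) (mulOp (QH2 P))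
    + pmul d (mulOp (GG1 P)) (pmul d (dpow (-1)) (mulOp (GG2 P)))
    + pmul d (mulOp (GG2 P)) (pmul d (dpow (-1)) (mulOp (GG1 P)))
    + pmul d (mulOp (uu 1)) (pmul d (dpow (-1)) (mulOp (GG3 P)))
    + pmul d (mulOp (GG3 P)) (pmul d (dpow (-1)) (mulOp (uu 1)))

/-- `B₀ = u₁⁻¹ ∘ ∂ ∘ u₁⁻¹ = H₀⁻¹`. -/
def B0 (d : Derivation ℂ KK KK) : ℤ → KK :=
  pmul d (mulOp (uu 1)⁻¹) (pmul d (dpow 1) (mulOp (uu 1)⁻¹))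

/-- The Lie bracket `{F,G} = X_F(G) − X_G(F)` on `K` (where `X` sends `F` to the
evolutionary derivation `X_F`). -/
def bracket (X : KK → Derivation ℂ KK KK) (F G : KK) : KK := X F G - X G F

/-!
Testing the identity against `F = u_M`, with `M` beyond every variable occurring in the
coefficients, separates the rows: `∑ⱼ m i j G⁽ʲ⁾ = 0` for every `i` and every `G ∈ W`. The field
of constants of `(K, ∂)` is `ℂ`: if `∂(p/q) = 0` with `p, q` coprime then `p ∣ ∂p`, and this forces
`p` to be constant because `∂/∂u_{N+1}` commutes with `∂` up to `∂/∂u_N`. A nonzero operator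
`∑_{j ≤ n} cⱼ ∂ʲ` with `cₙ ≠ 0` therefore has no `n + 1` solutions that are linearly independent
over `ℂ` (reduction of order: divide by one solution and differentiate), so on the
infinite-dimensional space `W` every row must vanish.
-/

open Finset MvPolynomial

namespace Derivation

variable {R A : Type*} [CommSemiring R] [CommSemiring A] [Algebra R A] (D : Derivation R A A)

theorem iterate_map_mul (n : ℕ) (a b : A) :
    D^[n] (a * b) = ∑ k ∈ range (n + 1), n.choose k • (D^[k] a * D^[n - k] b) := by
  induction n with
  | zero => simp
  | succ n ih =>
    rw [Function.iterate_succ_apply', ih, map_sum,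
      sum_choose_succ_nsmul (fun i j => D^[i] a * D^[j] b), ← sum_add_distrib]
    refine sum_congr rfl fun k hk => ?_
    have hkn : n + 1 - k = n - k + 1 := by have := mem_range.1 hk; omega
    rw [map_nsmul, leibniz, smul_eq_mul, smul_eq_mul, hkn, Function.iterate_succ_apply',
      Function.iterate_succ_apply', ← smul_add, mul_comm (D^[n - k] b)]

end Derivation

section LinearODE

variable {k K : Type*} [Field k] [Field K] [Algebra k K] (d : Derivation k K K)

/-- The coefficients of the composite operator `(∑_{j < N} c j ∂ʲ) ∘ a = ∑_m e m ∂ᵐ`. -/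
def compMulCoeff (N : ℕ) (c : ℕ → K) (a : K) (m : ℕ) : K :=
  ∑ j ∈ range N, j.choose m • (c j * d^[j - m] a)

theorem sum_iterate_mul_eq (N : ℕ) (c : ℕ → K) (a h : K) :
    ∑ j ∈ range N, c j * d^[j] (a * h) = ∑ m ∈ range N, compMulCoeff d N c a m * d^[m] h := by
  simp_rw [compMulCoeff, sum_mul]
  rw [sum_comm]
  refine sum_congr rfl fun j hj => ?_
  rw [mul_comm a h, d.iterate_map_mul, mul_sum,
    sum_subset (range_subset_range.2 (mem_range.1 hj))]
  · refine sum_congr rfl fun m _ => ?_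
    rw [smul_mul_assoc, mul_smul_comm]
    ring
  · intro m _ hm
    rw [Nat.choose_eq_zero_of_lt (by simpa using hm), zero_smul, mul_zero]

theorem compMulCoeff_zero (N : ℕ) (c : ℕ → K) (a : K) :
    compMulCoeff d N c a 0 = ∑ j ∈ range N, c j * d^[j] a := by
  simp [compMulCoeff]

theorem compMulCoeff_self (n : ℕ) (c : ℕ → K) (a : K) :
    compMulCoeff d (n + 1) c a n = c n * a := by
  rw [compMulCoeff, sum_eq_single n]
  · simp
  · intro j hj hjn
    rw [Nat.choose_eq_zero_of_lt (lt_of_le_of_ne (mem_range_succ_iff.1 hj) hjn), zero_smul]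
  · simp

variable {d}

theorem linearIndependent_deriv_succ_div_zero
    (hC : ∀ x : K, d x = 0 → ∃ z : k, x = algebraMap k K z) {n : ℕ} {g : Fin (n + 1) → K}
    (hg : LinearIndependent k g) : LinearIndependent k fun l : Fin n => d (g l.succ / g 0) := by
  obtain ⟨htail, hhead⟩ := linearIndependent_finSucc.1 hg
  let φ : K →ₗ[k] K := d.toLinearMap ∘ₗ LinearMap.mulRight k (g 0)⁻¹
  -- the kernel of `φ` is the line through `g 0`, since the constants are `k`
  have hφ : Disjoint (Submodule.span k (Set.range (Fin.tail g))) (LinearMap.ker φ) := by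
    refine Submodule.disjoint_def.2 fun y hy hker => ?_
    obtain ⟨z, hz⟩ := hC _ hker
    have hy' : y = z • g 0 := by
      rw [Algebra.smul_def, ← hz, LinearMap.mulRight_apply, inv_mul_cancel_right₀ (hg.ne_zero 0)]
    rcases eq_or_ne z 0 with rfl | hz0
    · simpa using hy'
    · rw [hy', Submodule.smul_mem_iff _ hz0] at hy
      exact absurd hy hhead
  have hcomp : (fun l : Fin n => d (g l.succ / g 0)) = φ ∘ Fin.tail g := by
    ext l
    simp [φ, Fin.tail, div_eq_mul_inv]
  exact hcomp ▸ htail.map hφ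

theorem not_linearIndependent_of_sum_iterate_eq_zero
    (hC : ∀ x : K, d x = 0 → ∃ z : k, x = algebraMap k K z) (n : ℕ) {c : ℕ → K} (hc : c n ≠ 0)
    {g : Fin (n + 1) → K} (hg : ∀ l, ∑ j ∈ range (n + 1), c j * d^[j] (g l) = 0) :
    ¬ LinearIndependent k g := by
  induction n generalizing c with
  | zero =>
    intro hli
    exact hli.ne_zero 0 (by simpa [hc] using hg 0)
  | succ n ih =>
    intro hli
    have hg0 : g 0 ≠ 0 := hli.ne_zero 0
    have hq (l : Fin (n + 1)) : ∑ m ∈ range (n + 1),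
        compMulCoeff d (n + 2) c (g 0) (m + 1) * d^[m] (d (g l.succ / g 0)) = 0 := by
      have := sum_iterate_mul_eq d (n + 2) c (g 0) (g l.succ / g 0)
      rw [mul_div_cancel₀ _ hg0, hg l.succ, sum_range_succ', compMulCoeff_zero, hg 0, zero_mul,
        add_zero] at this
      simpa [Function.iterate_succ_apply] using this.symm
    refine ih (by simpa [compMulCoeff_self] using mul_ne_zero hc hg0) hq
      (linearIndependent_deriv_succ_div_zero hC hli)

theorem exists_linearIndependent_of_not_finite {W : Submodule k K} (hW : ¬ Module.Finite k W)
    (n : ℕ) : ∃ g : Fin n → K, (∀ l, g l ∈ W) ∧ LinearIndependent k g := by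
  have hrank : (n : Cardinal) ≤ Module.rank k W :=
    Cardinal.natCast_lt_aleph0.le.trans (not_lt.1 (mt Module.rank_lt_aleph0_iff.1 hW))
  obtain ⟨f, hf⟩ := exists_linearIndependent_of_le_rank hrank
  exact ⟨fun l => f l, fun l => (f l).2, hf.map' W.subtype W.ker_subtype⟩

theorem forall_eq_zero_of_sum_iterate_eq_zero_of_not_finite
    (hC : ∀ x : K, d x = 0 → ∃ z : k, x = algebraMap k K z) {W : Submodule k K}
    (hW : ¬ Module.Finite k W) {N : ℕ} {c : ℕ → K}
    (h : ∀ G ∈ W, ∑ j ∈ range N, c j * d^[j] G = 0) : ∀ j < N, c j = 0 := by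
  induction N with
  | zero => simp
  | succ N ih =>
    by_cases hcN : c N = 0
    · have hlow : ∀ j < N, c j = 0 := ih fun G hG => by
        simpa [sum_range_succ, hcN] using h G hG
      intro j hj
      rcases (Nat.lt_succ_iff_lt_or_eq.1 hj) with hj | rfl
      exacts [hlow j hj, hcN]
    · obtain ⟨g, hgW, hg⟩ := exists_linearIndependent_of_not_finite hW (N + 1)
      exact absurd hg (not_linearIndependent_of_sum_iterate_eq_zero hC N hcN fun l => h _ (hgW l))

end LinearODE

namespace MvPolynomial

variable {R : Type*} [CommRing R]

variable (R) in
def totalDerivative : Derivation R (MvPolynomial ℕ R) (MvPolynomial ℕ R) :=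
  mkDerivation R fun i => X (i + 1)

theorem pderiv_succ_totalDerivative (i : ℕ) (f : MvPolynomial ℕ R) :
    pderiv (i + 1) (totalDerivative R f) = totalDerivative R (pderiv (i + 1) f) + pderiv i f := by
  have hcomm :
      ⁅(pderiv (i + 1) : Derivation R (MvPolynomial ℕ R) _), totalDerivative R⁆ = pderiv i := by
    classical
    refine derivation_ext fun j => ?_
    simp only [Derivation.commutator_apply, totalDerivative, mkDerivation_X, pderiv_X,
      Pi.single_apply]
    split_ifs <;> simp_all
  rw [← hcomm, Derivation.commutator_apply, add_sub_cancel]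

theorem pderiv_ne_zero_of_mem_vars [IsDomain R] [CharZero R] {σ : Type*} {f : MvPolynomial σ R}
    {i : σ} (h : i ∈ f.vars) : pderiv i f ≠ 0 := by
  classical
  obtain ⟨m, hm, hmi⟩ := (mem_vars_iff_mem_support i).1 h
  intro h0
  have hcoeff := coeff_pderiv (i := i) f (m - Finsupp.single i 1)
  rw [h0, coeff_zero, tsub_add_cancel_of_le (Finsupp.single_le_iff.2 (Nat.one_le_iff_ne_zero.2
    (Finsupp.mem_support_iff.1 hmi)))] at hcoeff
  exact mul_ne_zero (mem_support_iff.1 hm) (Nat.cast_add_one_ne_zero _) hcoeff.symm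

theorem totalDegree_pderiv_lt {σ : Type*} {f : MvPolynomial σ R} {i : σ} (h : pderiv i f ≠ 0) :
    (pderiv i f).totalDegree < f.totalDegree := by
  classical
  obtain ⟨m, hm, hdeg⟩ := exists_mem_eq_sup _ (support_nonempty.2 h) fun s => s.sum fun _ e => e
  have hcoeff : coeff (m + Finsupp.single i 1) f ≠ 0 :=
    left_ne_zero_of_mul (by rwa [← coeff_pderiv, ← mem_support_iff])
  have hle := le_totalDegree (mem_support_iff.2 hcoeff)
  rw [Finsupp.sum_add_index' (fun _ => rfl) (fun _ _ _ => rfl), Finsupp.sum_single_index rfl]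
    at hle
  rw [totalDegree, hdeg]
  omega

theorem eq_C_of_dvd_totalDerivative [IsDomain R] [CharZero R] {p : MvPolynomial ℕ R}
    (h : p ∣ totalDerivative R p) : p = C (p.coeff 0) := by
  rw [← vars_eq_empty_iff_eq_C]
  by_contra hne
  set N := p.vars.max' (nonempty_iff_ne_empty.2 hne)
  have hN : N ∈ p.vars := max'_mem _ _
  obtain ⟨r, hr⟩ := h
  -- apply `∂/∂X_{N+1}`, which kills `p`, to `∂ p = p * r`
  have hpN : pderiv N p = p * pderiv (N + 1) r := by
    have hN1 : N + 1 ∉ p.vars := fun hmem => by have := le_max' _ _ hmem; omega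
    simpa [pderiv_succ_totalDerivative, pderiv_mul, pderiv_eq_zero_of_notMem_vars hN1] using
      congrArg (pderiv (N + 1)) hr
  have hne0 := pderiv_ne_zero_of_mem_vars hN
  exact (totalDegree_pderiv_lt hne0).not_ge
    (totalDegree_le_of_dvd_of_isDomain ⟨_, hpN⟩ hne0)

end MvPolynomial

theorem Derivation.map_algebraMap_eq_totalDerivative {R K : Type*} [CommRing R] [CommRing K]
    [Algebra (MvPolynomial ℕ R) K] [Algebra R K] [IsScalarTower R (MvPolynomial ℕ R) K]
    {d : Derivation R K K}
    (hd : ∀ n, d (algebraMap (MvPolynomial ℕ R) K (X n)) =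
      algebraMap (MvPolynomial ℕ R) K (X (n + 1)))
    (f : MvPolynomial ℕ R) :
    d (algebraMap _ K f) = algebraMap _ K (totalDerivative R f) := by
  have hext : d.compAlgebraMap (MvPolynomial ℕ R) =
      (Algebra.linearMap (MvPolynomial ℕ R) K).compDer (totalDerivative R) :=
    derivation_ext fun i => by simpa [totalDerivative] using hd i
  exact DFunLike.congr_fun hext f

theorem Derivation.exists_eq_algebraMap_of_eq_zero {R K : Type*} [Field R] [CharZero R] [Field K]
    [Algebra (MvPolynomial ℕ R) K] [IsFractionRing (MvPolynomial ℕ R) K] [Algebra R K]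
    [IsScalarTower R (MvPolynomial ℕ R) K] {d : Derivation R K K}
    (hd : ∀ n, d (algebraMap (MvPolynomial ℕ R) K (X n)) =
      algebraMap (MvPolynomial ℕ R) K (X (n + 1)))
    {x : K} (hx : d x = 0) : ∃ z : R, x = algebraMap R K z := by
  set p := IsFractionRing.num (MvPolynomial ℕ R) x
  set q : MvPolynomial ℕ R := ↑(IsFractionRing.den (MvPolynomial ℕ R) x)
  have hq : algebraMap _ K q ≠ 0 :=
    IsFractionRing.to_map_ne_zero_of_mem_nonZeroDivisors (IsFractionRing.den _ x).2
  have hxq : x * algebraMap _ K q = algebraMap _ K p := by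
    rw [← IsFractionRing.mk'_num_den' (MvPolynomial ℕ R) x, div_mul_cancel₀ _ hq]
  have hderiv : p * totalDerivative R q = q * totalDerivative R p := by
    refine IsFractionRing.injective (MvPolynomial ℕ R) K ?_
    have := congrArg d hxq
    rw [Derivation.leibniz, hx, smul_zero, add_zero, smul_eq_mul,
      map_algebraMap_eq_totalDerivative hd, map_algebraMap_eq_totalDerivative hd] at this
    rw [map_mul, map_mul, ← hxq, ← this]
    ring
  have hrel : IsRelPrime p q := IsFractionRing.num_den_reduced (MvPolynomial ℕ R) x
  have hp := eq_C_of_dvd_totalDerivative (hrel.dvd_of_dvd_mul_left ⟨_, hderiv.symm⟩)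
  have hq' := eq_C_of_dvd_totalDerivative (hrel.symm.dvd_of_dvd_mul_left ⟨_, hderiv⟩)
  refine ⟨p.coeff 0 / q.coeff 0, ?_⟩
  rw [hp, hq', ← algebraMap_eq, ← IsScalarTower.algebraMap_apply,
    ← IsScalarTower.algebraMap_apply] at hxq
  rw [hq', ← algebraMap_eq, ← IsScalarTower.algebraMap_apply] at hq
  rw [map_div₀, eq_div_iff hq, hxq]

theorem eq_zero_of_forall_sum_mul_X_add_eq_zero {R K : Type*} [CommRing R] [Nontrivial R]
    [Field K] [Algebra (MvPolynomial ℕ R) K] [IsFractionRing (MvPolynomial ℕ R) K] {N : ℕ}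
    (a : Fin N → K) (h : ∀ M, ∑ i, a i * algebraMap (MvPolynomial ℕ R) K (X (M + i)) = 0) :
    a = 0 := by
  obtain ⟨b, hb⟩ := IsLocalization.exist_integer_multiples_of_finite
    (nonZeroDivisors (MvPolynomial ℕ R)) (S := K) a
  choose p hp using hb
  obtain ⟨M, hM⟩ := (univ.biUnion fun i => (p i).vars).exists_nat_subset_range
  have hsum : ∑ i, p i * X (M + i) = 0 := by
    refine IsFractionRing.injective (MvPolynomial ℕ R) K ?_
    simp [hp, Algebra.smul_def, mul_assoc, ← mul_sum, h M]
  funext i₀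
  -- `X_{M+i₀}` occurs in none of the numerators, so `∂/∂X_{M+i₀}` isolates the `i₀`-th term
  have hpi : p i₀ = 0 := by
    classical
    have hvars (i : Fin N) : M + i₀ ∉ (p i).vars := fun hmem => by
      have := mem_range.1 (hM (mem_biUnion.2 ⟨i, mem_univ _, hmem⟩))
      omega
    simpa [pderiv_mul, pderiv_eq_zero_of_notMem_vars (hvars _), pderiv_X, Pi.single_apply,
      Fin.val_inj] using congrArg (pderiv (M + i₀)) hsum
  have hb0 : algebraMap _ K (b : MvPolynomial ℕ R) ≠ 0 :=
    IsFractionRing.to_map_ne_zero_of_mem_nonZeroDivisors b.2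
  simpa [hpi, Algebra.smul_def, hb0] using hp i₀

theorem exists_lt_of_support_finite {M : Type*} [Zero M] {m : ℕ → ℕ → M}
    (hfin : (Function.support fun p : ℕ × ℕ => m p.1 p.2).Finite) :
    ∃ N, ∀ i j, m i j ≠ 0 → i < N ∧ j < N := by
  obtain ⟨⟨B₁, B₂⟩, hB⟩ := hfin.bddAbove
  refine ⟨B₁ + B₂ + 1, fun i j hij => ?_⟩
  have := Prod.mk_le_mk.1 (hB (show (i, j) ∈ _ from hij))
  omega

theorem finsum_finsum_eq_sum_range_sum_range {M : Type*} [AddCommMonoid M] {f : ℕ → ℕ → M}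
    {N : ℕ} (hf : ∀ i j, f i j ≠ 0 → i < N ∧ j < N) :
    ∑ᶠ (i : ℕ) (j : ℕ), f i j = ∑ i ∈ range N, ∑ j ∈ range N, f i j := by
  have hrow (i : ℕ) : ∑ᶠ j, f i j = ∑ j ∈ range N, f i j :=
    finsum_eq_sum_of_support_subset _ fun j hj => by simpa using (hf i j hj).2
  simp_rw [hrow]
  refine finsum_eq_sum_of_support_subset _ fun i hi => ?_
  by_contra hiN
  exact hi (sum_eq_zero fun j _ => not_not.1 fun hij => hiN (by simpa using (hf i j hij).1))

theorem iterate_uu {d : Derivation ℂ KK KK} (hd : ∀ n : ℕ, d (uu n) = uu (n + 1)) (M i : ℕ) :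
    d^[i] (uu M) = uu (M + i) := by
  induction i with
  | zero => rfl
  | succ i ih => rw [Function.iterate_succ_apply', ih, hd, add_assoc]

/-- vanishing of bidifferential operators. -/
theorem statement6
    (d : Derivation ℂ KK KK) (hd : ∀ n : ℕ, d (uu n) = uu (n + 1))
    (m : ℕ → ℕ → KK)
    (hfin : (Function.support fun p : ℕ × ℕ => m p.1 p.2).Finite)
    (W : Submodule ℂ KK) (hWinf : ¬ Module.Finite ℂ W)
    (h : ∀ F : KK, ∀ G ∈ W,
      ∑ᶠ (i : ℕ), ∑ᶠ (j : ℕ), m i j * (⇑d)^[i] F * (⇑d)^[j] G = 0) :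
    ∀ i j : ℕ, m i j = 0 := by
  obtain ⟨N, hN⟩ := exists_lt_of_support_finite hfin
  have hsum (F G : KK) (hG : G ∈ W) :
      ∑ i ∈ range N, (∑ j ∈ range N, m i j * d^[j] G) * d^[i] F = 0 := by
    rw [← h F G hG, finsum_finsum_eq_sum_range_sum_range fun i j hij =>
      hN i j (left_ne_zero_of_mul (left_ne_zero_of_mul hij))]
    refine sum_congr rfl fun i _ => ?_
    rw [sum_mul]
    exact sum_congr rfl fun j _ => by ring
  have hrow (G : KK) (hG : G ∈ W) (i : ℕ) (hi : i < N) : ∑ j ∈ range N, m i j * d^[j] G = 0 := by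
    refine congrFun (eq_zero_of_forall_sum_mul_X_add_eq_zero (R := ℂ)
      (fun i : Fin N => ∑ j ∈ range N, m i j * d^[j] G) fun M => ?_) ⟨i, hi⟩
    refine (Fin.sum_univ_eq_sum_range (fun i => (∑ j ∈ range N, m i j * d^[j] G) * uu (M + i))
      N).trans ?_
    simpa [iterate_uu hd] using hsum (uu M) G hG
  intro i j
  by_contra hij
  exact hij (forall_eq_zero_of_sum_iterate_eq_zero_of_not_finite
    (fun x hx => d.exists_eq_algebraMap_of_eq_zero hd hx) hWinf
    (fun G hG => hrow G hG i (hN i j hij).1) j (hN i j hij).2)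
end
end

section
/- (Remark 4: F(H₀) = V/∂V.) For every f ∈ V, the element u₁·(δf/δu) lies in ∂(V); consequently, for every f ∈ V there exists h ∈ V such that u₁^{−1}·∂(u₁^{−1}·h) = δf/δu, i.e. δf/δu lies in the image of the operator B = u₁^{−1}∘∂∘u₁^{−1} applied to V. -/
noncomputable section

open scoped BigOperators

namespace Statement11Aux

set_option maxHeartbeats 1600000
set_option synthInstance.maxHeartbeats 400000

open Finset

lemma loc_smul_def (b : MvPolynomial ℕ ℂ) (x : KK) :
    b • x = algebraMap (MvPolynomial ℕ ℂ) KK b * x := by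
  rw [← algebraMap_smul KK b x, smul_eq_mul]

lemma phi_inj : Function.Injective (algebraMap (MvPolynomial ℕ ℂ) KK) :=
  IsFractionRing.injective _ _

lemma uu1_ne : uu 1 ≠ 0 := by
  have hX : (MvPolynomial.X 1 : MvPolynomial ℕ ℂ) ≠ 0 := MvPolynomial.X_ne_zero _
  intro h
  exact hX (phi_inj (show algebraMap (MvPolynomial ℕ ℂ) KK (MvPolynomial.X 1) =
      algebraMap (MvPolynomial ℕ ℂ) KK 0 by rw [map_zero]; exact h))

lemma uu_mem (n : ℕ) : uu n ∈ VV := Algebra.subset_adjoin (Or.inl ⟨n, rfl⟩)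

lemma uuinv_mem : (uu 1)⁻¹ ∈ VV := Algebra.subset_adjoin (Or.inr rfl)

variable (d : Derivation ℂ KK KK)

lemma iter_zero (k : ℕ) : (⇑d)^[k] (0 : KK) = 0 := by
  induction k with
  | zero => rfl
  | succ k ih => rw [Function.iterate_succ_apply, map_zero]; exact ih

lemma iter_one (k : ℕ) (hk : k ≠ 0) : (⇑d)^[k] (1 : KK) = 0 := by
  obtain ⟨k, rfl⟩ := Nat.exists_eq_succ_of_ne_zero hk
  rw [Function.iterate_succ_apply, Derivation.map_one_eq_zero, iter_zero]

lemma iter_uu (hd : ∀ n : ℕ, d (uu n) = uu (n + 1)) (m k : ℕ) : (⇑d)^[k] (uu m) = uu (m + k) := by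
  induction k with
  | zero => rfl
  | succ k ih =>
    rw [Function.iterate_succ_apply', ih, hd]
    exact congrArg uu (Nat.add_assoc m k 1)

lemma d_mem (hd : ∀ n : ℕ, d (uu n) = uu (n + 1)) (x : KK) (hx : x ∈ VV) : d x ∈ VV := by
  have hx' : x ∈ Algebra.adjoin ℂ (Set.range uu ∪ {(uu 1)⁻¹}) := hx
  clear hx
  induction hx' using Algebra.adjoin_induction with
  | mem y hy =>
    rcases hy with ⟨n, rfl⟩ | hy
    · rw [hd]; exact uu_mem _
    · rw [Set.mem_singleton_iff] at hy; subst hy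
      rw [Derivation.leibniz_inv, smul_eq_mul]
      have h2 : d (uu 1) = uu 2 := hd 1
      rw [h2]
      exact mul_mem (neg_mem (pow_mem uuinv_mem 2)) (uu_mem 2)
  | algebraMap r => rw [Derivation.map_algebraMap]; exact zero_mem _
  | add x y hx hy ihx ihy => rw [map_add]; exact add_mem ihx ihy
  | mul x y hx hy ihx ihy =>
    rw [Derivation.leibniz, smul_eq_mul, smul_eq_mul]
    exact add_mem (mul_mem hx ihy) (mul_mem hy ihx)

lemma iter_mem (hd : ∀ n : ℕ, d (uu n) = uu (n + 1)) (k : ℕ) (x : KK) (hx : x ∈ VV) : (⇑d)^[k] x ∈ VV := by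
  induction k with
  | zero => exact hx
  | succ k ih => rw [Function.iterate_succ_apply']; exact d_mem d hd _ ih

lemma sum_shrink {q r : ℕ → KK} {N M : ℕ} (h : N ≤ M) (h0 : ∀ n, N ≤ n → q n = 0) :
    ∑ n ∈ Finset.range M, q n * r n = ∑ n ∈ Finset.range N, q n * r n := by
  refine (Finset.sum_subset (Finset.range_subset_range.mpr h) fun x _ hx => ?_).symm
  rw [h0 x (by simpa using hx), zero_mul]

/-- Fréchet-derivative representation of elements of `VV`. -/
lemma rep (f : KK) (hf : f ∈ VV) :
    ∃ (N : ℕ) (q : ℕ → KK), (∀ n, q n ∈ VV) ∧ (∀ n, N ≤ n → q n = 0) ∧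
      ∀ D : Derivation ℂ KK KK, D f = ∑ n ∈ Finset.range N, q n * D (uu n) := by
  have hf' : f ∈ Algebra.adjoin ℂ (Set.range uu ∪ {(uu 1)⁻¹}) := hf
  clear hf
  induction hf' using Algebra.adjoin_induction with
  | mem y hy =>
    rcases hy with ⟨n, rfl⟩ | hy
    · refine ⟨n + 1, fun k => if k = n then 1 else 0, ?_, ?_, ?_⟩
      · intro k; dsimp only; split
        · exact one_mem _
        · exact zero_mem _
      · intro k hk; dsimp only; rw [if_neg]; omega
      · intro D
        rw [Finset.sum_eq_single n]
        · simp
        · intro b _ hb; simp [hb]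
        · intro hn; exact absurd (Finset.mem_range.mpr (by omega)) hn
    · rw [Set.mem_singleton_iff] at hy; subst hy
      refine ⟨2, fun k => if k = 1 then -((uu 1)⁻¹ ^ 2) else 0, ?_, ?_, ?_⟩
      · intro k; dsimp only; split
        · exact neg_mem (pow_mem uuinv_mem 2)
        · exact zero_mem _
      · intro k hk; dsimp only; rw [if_neg]; omega
      · intro D
        rw [Derivation.leibniz_inv]
        simp [Finset.sum_range_succ, smul_eq_mul]
  | algebraMap r =>
    exact ⟨0, 0, fun n => zero_mem _, fun n _ => rfl,
      fun D => by simp [Derivation.map_algebraMap]⟩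
  | add x y hx hy ihx ihy =>
    obtain ⟨N₁, q₁, hq₁, h0₁, hr₁⟩ := ihx
    obtain ⟨N₂, q₂, hq₂, h0₂, hr₂⟩ := ihy
    refine ⟨max N₁ N₂, fun n => q₁ n + q₂ n, fun n => add_mem (hq₁ n) (hq₂ n), ?_, ?_⟩
    · intro n hn; dsimp only
      rw [h0₁ n (le_trans (le_max_left _ _) hn), h0₂ n (le_trans (le_max_right _ _) hn),
        add_zero]
    · intro D
      have e1 : ∑ n ∈ Finset.range (max N₁ N₂), (q₁ n + q₂ n) * D (uu n)
          = ∑ n ∈ Finset.range (max N₁ N₂), q₁ n * D (uu n)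
            + ∑ n ∈ Finset.range (max N₁ N₂), q₂ n * D (uu n) := by
        rw [← Finset.sum_add_distrib]
        exact Finset.sum_congr rfl fun n _ => add_mul _ _ _
      rw [map_add, hr₁ D, hr₂ D, e1,
        sum_shrink (le_max_left N₁ N₂) h0₁, sum_shrink (le_max_right N₁ N₂) h0₂]
  | mul x y hx hy ihx ihy =>
    obtain ⟨N₁, q₁, hq₁, h0₁, hr₁⟩ := ihx
    obtain ⟨N₂, q₂, hq₂, h0₂, hr₂⟩ := ihy
    have hxV : x ∈ VV := hx
    have hyV : y ∈ VV := hy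
    refine ⟨max N₁ N₂, fun n => x * q₂ n + y * q₁ n,
      fun n => add_mem (mul_mem hxV (hq₂ n)) (mul_mem hyV (hq₁ n)), ?_, ?_⟩
    · intro n hn; dsimp only
      rw [h0₁ n (le_trans (le_max_left _ _) hn), h0₂ n (le_trans (le_max_right _ _) hn)]
      ring
    · intro D
      have e1 : ∑ n ∈ Finset.range (max N₁ N₂), (x * q₂ n + y * q₁ n) * D (uu n)
          = x * ∑ n ∈ Finset.range (max N₁ N₂), q₂ n * D (uu n)
            + y * ∑ n ∈ Finset.range (max N₁ N₂), q₁ n * D (uu n) := by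
        rw [Finset.mul_sum, Finset.mul_sum, ← Finset.sum_add_distrib]
        exact Finset.sum_congr rfl fun n _ => by ring
      rw [Derivation.leibniz, smul_eq_mul, smul_eq_mul, e1,
        sum_shrink (le_max_left N₁ N₂) h0₁, sum_shrink (le_max_right N₁ N₂) h0₂,
        ← hr₁ D, ← hr₂ D]

/-- Uniqueness of differential-operator coefficients. -/
lemma unique (K0 : ℕ) (c : ℕ → KK)
    (h : ∀ m : ℕ, ∑ n ∈ Finset.range K0, c n * uu (m + n) = 0) :
    ∀ n, n < K0 → c n = 0 := by
  classical
  obtain ⟨b, hb⟩ := IsLocalization.exist_integer_multiples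
    (nonZeroDivisors (MvPolynomial ℕ ℂ)) (Finset.range K0) c
  have hex : ∀ n : ℕ, ∃ r : MvPolynomial ℕ ℂ,
      algebraMap (MvPolynomial ℕ ℂ) KK r
        = algebraMap (MvPolynomial ℕ ℂ) KK (b : MvPolynomial ℕ ℂ)
            * (if n < K0 then c n else 0) := by
    intro n
    by_cases hn : n < K0
    · obtain ⟨r, hr⟩ := hb n (Finset.mem_range.mpr hn)
      exact ⟨r, by rw [if_pos hn, hr, loc_smul_def]⟩
    · exact ⟨0, by rw [if_neg hn, map_zero, mul_zero]⟩
  choose a ha using hex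
  have hpoly : ∀ m : ℕ, ∑ n ∈ Finset.range K0, a n * MvPolynomial.X (m + n) = 0 := by
    intro m
    apply phi_inj
    rw [map_zero, map_sum]
    have : ∀ n ∈ Finset.range K0,
        algebraMap (MvPolynomial ℕ ℂ) KK (a n * MvPolynomial.X (m + n))
          = algebraMap (MvPolynomial ℕ ℂ) KK (b : MvPolynomial ℕ ℂ) * (c n * uu (m + n)) := by
      intro n hn
      have h1 : algebraMap (MvPolynomial ℕ ℂ) KK (a n)
          = algebraMap (MvPolynomial ℕ ℂ) KK (b : MvPolynomial ℕ ℂ) * c n := by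
        rw [ha n, if_pos (Finset.mem_range.mp hn)]
      rw [map_mul, h1, uu]
      ring
    rw [Finset.sum_congr rfl this, ← Finset.mul_sum, h m, mul_zero]
  set m : ℕ := (Finset.range K0).sup (fun n => (a n).vars.sup id + 1) with hm
  have hvars : ∀ n, n < K0 → ∀ i ∈ (a n).vars, i < m := by
    intro n hn i hi
    have h1 : (a n).vars.sup id + 1 ≤ m :=
      Finset.le_sup (f := fun n => (a n).vars.sup id + 1) (Finset.mem_range.mpr hn)
    have h2 : i ≤ (a n).vars.sup id := Finset.le_sup (f := id) hi
    omega
  intro k hk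
  set g : ℕ → MvPolynomial ℕ ℂ :=
    fun i => if m ≤ i then (if i = m + k then 1 else 0) else MvPolynomial.X i with hg
  have hfix : ∀ n, n < K0 → MvPolynomial.aeval g (a n) = a n := by
    intro n hn
    have := MvPolynomial.hom_congr_vars
      (f₁ := (MvPolynomial.aeval g : MvPolynomial ℕ ℂ →ₐ[ℂ] MvPolynomial ℕ ℂ).toRingHom)
      (f₂ := RingHom.id (MvPolynomial ℕ ℂ)) (p₁ := a n) (p₂ := a n)
      ?_ ?_ rfl
    · exact this
    · ext r
      simp [MvPolynomial.algebraMap_eq]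
    · intro i hi _
      have : i < m := hvars n hn i hi
      simp [hg, Nat.not_le.mpr this]
  have hak : a k = 0 := by
    have h0 := congrArg (MvPolynomial.aeval g) (hpoly m)
    rw [map_zero, map_sum] at h0
    have : ∀ n ∈ Finset.range K0,
        MvPolynomial.aeval g (a n * MvPolynomial.X (m + n))
          = if n = k then a n else 0 := by
      intro n hn
      rw [map_mul, hfix n (Finset.mem_range.mp hn), MvPolynomial.aeval_X]
      have hmn : m ≤ m + n := Nat.le_add_right m n
      rw [hg]
      dsimp only
      rw [if_pos hmn]
      by_cases hnk : n = k
      · rw [if_pos (by omega), if_pos hnk, mul_one]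
      · rw [if_neg (by omega), if_neg hnk, mul_zero]
    rw [Finset.sum_congr rfl this, Finset.sum_ite_eq' (Finset.range K0) k (fun n => a n),
      if_pos (Finset.mem_range.mpr hk)] at h0
    exact h0
  have hbne : algebraMap (MvPolynomial ℕ ℂ) KK (b : MvPolynomial ℕ ℂ) ≠ 0 := by
    intro h0
    exact nonZeroDivisors.coe_ne_zero b (phi_inj (by rw [map_zero]; exact h0))
  have h5 := ha k
  rw [if_pos hk, hak, map_zero] at h5
  rcases mul_eq_zero.mp h5.symm with h0 | h0
  · exact absurd h0 hbne
  · exact h0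

lemma prod_desc (k : ℕ) :
    ∏ j ∈ Finset.range k, (((k : ℤ) : ℚ) - (j : ℚ)) = (Nat.factorial k : ℚ) := by
  induction k with
  | zero => simp
  | succ k ih =>
    rw [Finset.prod_range_succ']
    have e1 : ∀ j : ℕ, (((k + 1 : ℕ) : ℤ) : ℚ) - ((j + 1 : ℕ) : ℚ) = ((k : ℤ) : ℚ) - (j : ℚ) := by
      intro j; push_cast; ring
    have e2 : ∏ j ∈ Finset.range k, ((((k + 1 : ℕ) : ℤ) : ℚ) - ((j + 1 : ℕ) : ℚ))
        = ∏ j ∈ Finset.range k, (((k : ℤ) : ℚ) - (j : ℚ)) :=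
      Finset.prod_congr rfl fun j _ => e1 j
    rw [e2, ih, Nat.factorial_succ]
    push_cast
    ring

lemma binc_self (k : ℕ) : binc (k : ℤ) k = 1 := by
  rw [binc, prod_desc, div_self]
  exact_mod_cast Nat.factorial_ne_zero k

/-- Integration by parts. -/
lemma ibp (hd : ∀ n : ℕ, d (uu n) = uu (n + 1)) (k : ℕ) (a : KK) (ha : a ∈ VV) : ∀ b : KK, b ∈ VV →
    ∃ s ∈ VV, a * (⇑d)^[k] b = (-1 : KK) ^ k * (⇑d)^[k] a * b + d s := by
  induction k with
  | zero => exact fun b _ => ⟨0, zero_mem _, by simp⟩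
  | succ k ih =>
    intro b hb
    obtain ⟨s₁, hs₁, hs⟩ := ih (d b) (d_mem d hd b hb)
    refine ⟨s₁ + (-1 : KK) ^ k * (⇑d)^[k] a * b,
      add_mem hs₁ (mul_mem (mul_mem (pow_mem (neg_mem (one_mem _)) k)
        (iter_mem d hd k a ha)) hb), ?_⟩
    have hneg : d ((-1 : KK) ^ k) = 0 := by
      have e : ((-1 : KK) ^ k) = algebraMap ℂ KK ((-1) ^ k) := by
        rw [map_pow, map_neg, map_one]
      rw [e, Derivation.map_algebraMap]
    have h1 : (⇑d)^[k + 1] a = d ((⇑d)^[k] a) := Function.iterate_succ_apply' (⇑d) k a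
    have h2 : (⇑d)^[k + 1] b = (⇑d)^[k] (d b) := Function.iterate_succ_apply (⇑d) k b
    have h3 : d ((-1 : KK) ^ k * (⇑d)^[k] a * b)
        = (-1 : KK) ^ k * ((⇑d)^[k] a * d b + b * d ((⇑d)^[k] a)) := by
      rw [mul_assoc, Derivation.leibniz, Derivation.leibniz, hneg, smul_eq_mul, smul_eq_mul,
        smul_eq_mul, smul_eq_mul]
      ring
    rw [h2, hs, map_add, h3, h1]
    ring

end Statement11Aux

/-- Remark 4: for every f ∈ V, u₁·(δf/δu) ∈ ∂(V); consequently
δf/δu lies in the image of B = u₁⁻¹∘∂∘u₁⁻¹ applied to V. -/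
theorem statement11
    (d : Derivation ℂ KK KK) (hd : ∀ n : ℕ, d (uu n) = uu (n + 1))
    (X : KK → Derivation ℂ KK KK) (hX : ∀ (F : KK) (n : ℕ), X F (uu n) = (⇑d)^[n] F)
    (DF : KK → ℤ → KK) (hDF : ∀ F : KK, IsDiffOp (DF F))
    (hDF2 : ∀ F G : KK, papply d (DF F) G = X G F)
    (f : KK) (hf : f ∈ VV) :
    (∃ g ∈ VV, uu 1 * vard d DF f = d g) ∧
    (∃ h ∈ VV, (uu 1)⁻¹ * d ((uu 1)⁻¹ * h) = vard d DF f) := by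
  classical
  obtain ⟨N, q, hqV, hq0, hrep⟩ := Statement11Aux.rep f hf
  obtain ⟨M, hM⟩ := hDF f
  set K0 : ℕ := max N (M.toNat + 1) with hK0
  have hNK : N ≤ K0 := le_max_left _ _
  have hDFz : ∀ n : ℕ, K0 ≤ n → DF f (n : ℤ) = 0 := by
    intro n hn
    have h1 : M.toNat + 1 ≤ n := le_trans (le_max_right _ _) hn
    exact hM n (Or.inr (by omega))
  have happly : ∀ G : KK, papply d (DF f) G
      = ∑ n ∈ Finset.range K0, DF f (n : ℤ) * (⇑d)^[n] G := by
    intro G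
    rw [papply]
    apply finsum_eq_sum_of_support_subset
    intro n hn
    simp only [Function.mem_support] at hn
    simp only [Finset.coe_range, Set.mem_Iio]
    by_contra hcon
    exact hn (by rw [hDFz n (by omega), zero_mul])
  have hXf : ∀ G : KK, X G f = ∑ n ∈ Finset.range K0, q n * (⇑d)^[n] G := by
    intro G
    rw [hrep (X G), Finset.sum_congr rfl (fun n _ => by rw [hX G n] :
      ∀ n ∈ Finset.range N, q n * X G (uu n) = q n * (⇑d)^[n] G)]
    exact (Statement11Aux.sum_shrink hNK hq0).symm
  have hkey : ∀ n : ℕ, n < K0 → DF f (n : ℤ) = q n := by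
    have hu := Statement11Aux.unique K0 (fun n => DF f (n : ℤ) - q n) ?_
    · intro n hn
      exact sub_eq_zero.mp (hu n hn)
    · intro m
      show ∑ n ∈ Finset.range K0, (DF f (n : ℤ) - q n) * uu (m + n) = 0
      have h1 := happly (uu m)
      rw [hDF2 f (uu m), hXf (uu m)] at h1
      have e : ∀ n ∈ Finset.range K0, (DF f (n : ℤ) - q n) * uu (m + n)
          = DF f (n : ℤ) * (⇑d)^[n] (uu m) - q n * (⇑d)^[n] (uu m) := by
        intro n _
        rw [Statement11Aux.iter_uu d hd m n, sub_mul]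
      rw [Finset.sum_congr rfl e, Finset.sum_sub_distrib, ← h1, sub_self]
  have hvard : vard d DF f = ∑ k ∈ Finset.range K0, (-1 : KK) ^ k * (⇑d)^[k] (q k) := by
    rw [vard, papply, finsum_eq_single _ 0 ?_]
    · simp only [Nat.cast_zero, Function.iterate_zero, id_eq, mul_one]
      rw [padj, finsum_eq_sum_of_support_subset _ (s := Finset.range K0) ?_]
      · refine Finset.sum_congr rfl fun k hk => ?_
        simp only [zero_add]
        rw [zpow_natCast, Statement11Aux.binc_self, Rat.cast_one, mul_one,
          hkey k (Finset.mem_range.mp hk)]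
      · intro k hk
        simp only [Function.mem_support] at hk
        simp only [Finset.coe_range, Set.mem_Iio]
        by_contra hcon
        apply hk
        have hz : DF f ((0 : ℤ) + (k : ℤ)) = 0 := by
          rw [zero_add]; exact hDFz k (by omega)
        rw [hz, Statement11Aux.iter_zero, mul_zero]
    · intro n hn
      rw [Statement11Aux.iter_one d n hn, mul_zero]
  have hibp : ∀ k : ℕ, ∃ s ∈ VV, q k * (⇑d)^[k] (uu 1)
      = (-1 : KK) ^ k * (⇑d)^[k] (q k) * uu 1 + d s :=
    fun k => Statement11Aux.ibp d hd k (q k) (hqV k) (uu 1) (Statement11Aux.uu_mem 1)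
  choose s hsV hsEq using hibp
  have hXu1 : X (uu 1) f = d f := by
    rw [hrep (X (uu 1)), hrep d]
    refine Finset.sum_congr rfl fun n _ => ?_
    rw [hX (uu 1) n, hd n, Statement11Aux.iter_uu d hd 1 n, Nat.add_comm 1 n]
  have hdf : d f = uu 1 * vard d DF f + d (∑ k ∈ Finset.range K0, s k) := by
    rw [← hXu1, hXf (uu 1), Finset.sum_congr rfl fun k _ => hsEq k,
      Finset.sum_add_distrib, map_sum]
    congr 1
    rw [hvard, Finset.mul_sum]
    exact Finset.sum_congr rfl fun k _ => by ring
  have part1 : ∃ g ∈ VV, uu 1 * vard d DF f = d g := by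
    refine ⟨f - ∑ k ∈ Finset.range K0, s k,
      sub_mem hf (sum_mem fun k _ => hsV k), ?_⟩
    rw [map_sub, hdf]
    ring
  refine ⟨part1, ?_⟩
  obtain ⟨g, hgV, hg⟩ := part1
  refine ⟨uu 1 * g, mul_mem (Statement11Aux.uu_mem 1) hgV, ?_⟩
  rw [inv_mul_cancel_left₀ Statement11Aux.uu1_ne, ← hg,
    inv_mul_cancel_left₀ Statement11Aux.uu1_ne]
end
end

section
/- (The Krichever–Novikov equation is hamiltonian for H₀, [S84], instance for G₁.) There exists φ ∈ V such that u₁^{−1}·∂(u₁^{−1}·G₁) = δφ/δu; equivalently, G₁ = u₁·g with ∂(g) = u₁·(δφ/δu), i.e. G₁ = H₀(δφ/δu) where H₀ = u₁∘∂^{−1}∘u₁. -/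
noncomputable section

open scoped BigOperators

/-! ### Auxiliary lemmas -/

lemma uu_ne_zero (n : ℕ) : (uu n : KK) ≠ 0 := by
  intro h
  have h2 : (MvPolynomial.X n : MvPolynomial ℕ ℂ) = 0 :=
    IsFractionRing.injective (MvPolynomial ℕ ℂ) KK (by rw [map_zero]; exact h)
  exact MvPolynomial.X_ne_zero n h2

lemma key_indep (N : ℕ) (a : ℕ → KK)
    (h : ∀ m : ℕ, ∑ n ∈ Finset.range N, a n * uu (m + n) = 0) :
    ∀ n ∈ Finset.range N, a n = 0 := by
  classical
  obtain ⟨b, hb⟩ := IsLocalization.exist_integer_multiples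
    (nonZeroDivisors (MvPolynomial ℕ ℂ)) (Finset.range N) a
  have hp' : ∀ i, ∃ y : MvPolynomial ℕ ℂ, i ∈ Finset.range N →
      algebraMap (MvPolynomial ℕ ℂ) KK y = (b : MvPolynomial ℕ ℂ) • a i := by
    intro i
    by_cases hi : i ∈ Finset.range N
    · obtain ⟨y, hy⟩ := hb i hi
      exact ⟨y, fun _ => hy⟩
    · exact ⟨0, fun h' => absurd h' hi⟩
  choose p hp using hp'
  have hsm : ∀ x : KK, (b : MvPolynomial ℕ ℂ) • x
      = algebraMap (MvPolynomial ℕ ℂ) KK (b : MvPolynomial ℕ ℂ) * x :=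
    fun x => by rw [← algebraMap_smul KK ((b : MvPolynomial ℕ ℂ)) x, smul_eq_mul]
  set m : ℕ := ((Finset.range N).biUnion fun n => (p n).vars).sup id + 1 with hm
  have hvars : ∀ n ∈ Finset.range N, ∀ j ∈ (p n).vars, j < m := by
    intro n hn j hj
    have : j ≤ ((Finset.range N).biUnion fun n => (p n).vars).sup id :=
      Finset.le_sup (f := id) (Finset.mem_biUnion.mpr ⟨n, hn, hj⟩)
    omega
  have hsum : (∑ n ∈ Finset.range N, p n * MvPolynomial.X (m + n)) = 0 := by
    apply IsFractionRing.injective (MvPolynomial ℕ ℂ) KK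
    rw [map_sum, map_zero]
    have : ∀ n ∈ Finset.range N,
        algebraMap (MvPolynomial ℕ ℂ) KK (p n * MvPolynomial.X (m + n))
          = algebraMap (MvPolynomial ℕ ℂ) KK (b : MvPolynomial ℕ ℂ) * (a n * uu (m + n)) := by
      intro n hn
      rw [map_mul, hp n hn, hsm, uu]
      ring
    rw [Finset.sum_congr rfl this, ← Finset.mul_sum, h m, mul_zero]
  intro n₀ hn₀
  set σ : ℕ → MvPolynomial ℕ ℂ :=
    fun j => if j = m + n₀ then 1 else if j < m then MvPolynomial.X j else 0 with hσ
  have hfix : ∀ n ∈ Finset.range N, MvPolynomial.aeval σ (p n) = p n := by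
    intro n hn
    have h1 : MvPolynomial.eval₂Hom (algebraMap ℂ (MvPolynomial ℕ ℂ)) σ (p n)
        = MvPolynomial.eval₂Hom (algebraMap ℂ (MvPolynomial ℕ ℂ)) MvPolynomial.X (p n) := by
      refine MvPolynomial.eval₂Hom_congr' rfl ?_ rfl
      intro i hi _
      have him : i < m := hvars n hn i hi
      simp only [hσ]
      rw [if_neg (by omega), if_pos him]
    have h2 : MvPolynomial.aeval (R := ℂ) MvPolynomial.X (p n) = p n :=
      MvPolynomial.aeval_X_left_apply (p n)
    rw [MvPolynomial.aeval_def, ← MvPolynomial.coe_eval₂Hom, h1]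
    rw [MvPolynomial.aeval_def, ← MvPolynomial.coe_eval₂Hom] at h2
    exact h2
  have hp0 : p n₀ = 0 := by
    have h0 := congrArg (MvPolynomial.aeval (R := ℂ) σ) hsum
    rw [map_sum, map_zero] at h0
    rw [Finset.sum_eq_single n₀ ?side ?nomem] at h0
    case side =>
      intro n hn hne
      rw [map_mul, MvPolynomial.aeval_X]
      have : σ (m + n) = 0 := by
        simp only [hσ]
        rw [if_neg (by omega), if_neg (by omega)]
      rw [this, mul_zero]
    case nomem => intro hc; exact absurd hn₀ hc
    rw [map_mul, MvPolynomial.aeval_X] at h0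
    have : σ (m + n₀) = 1 := by simp [hσ]
    rw [this, mul_one, hfix n₀ hn₀] at h0
    exact h0
  have hz := hp n₀ hn₀
  rw [hp0, map_zero] at hz
  have hb0 : algebraMap (MvPolynomial ℕ ℂ) KK (b : MvPolynomial ℕ ℂ) ≠ 0 := by
    intro hc
    exact nonZeroDivisors.ne_zero b.2
      (IsFractionRing.injective (MvPolynomial ℕ ℂ) KK (by simpa using hc))
  rw [hsm] at hz
  rcases mul_eq_zero.mp hz.symm with h' | h'
  · exact absurd h' hb0
  · exact h'

lemma D_q (D : Derivation ℂ KK KK) (a b : ℕ) : D ((a : KK) / (b : KK)) = 0 := by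
  rw [div_eq_mul_inv, D.leibniz, D.leibniz_inv, D.map_natCast a, D.map_natCast b]
  simp

lemma d_iter_uu (d : Derivation ℂ KK KK) (hd : ∀ n : ℕ, d (uu n) = uu (n + 1)) :
    ∀ (k m : ℕ), (⇑d)^[k] (uu m) = uu (m + k) := by
  intro k
  induction k with
  | zero => intro m; simp
  | succ k ih =>
    intro m
    rw [Function.iterate_succ_apply, hd m, ih (m + 1)]
    congr 1
    omega

lemma d_iter_zero (d : Derivation ℂ KK KK) (k : ℕ) : (⇑d)^[k] (0 : KK) = 0 :=
  Function.iterate_fixed (map_zero d) k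

def cc0 (P : Polynomial ℂ) : KK := (1/3 : KK) * pev P 1 * ((uu 1)⁻¹ * (uu 1)⁻¹)
def cc1 (P : Polynomial ℂ) : KK :=
  -((uu 2 * uu 2 + (2/3 : KK) * pev P 0) * ((uu 1)⁻¹ * (uu 1)⁻¹ * (uu 1)⁻¹))
def cc2 : KK := uu 2 * ((uu 1)⁻¹ * (uu 1)⁻¹)
def phi0 (P : Polynomial ℂ) : KK :=
  (1/2 : KK) * (uu 2 * uu 2 * ((uu 1)⁻¹ * (uu 1)⁻¹))
    + (1/3 : KK) * (pev P 0 * ((uu 1)⁻¹ * (uu 1)⁻¹))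

set_option maxHeartbeats 1000000 in
set_option synthInstance.maxHeartbeats 1000000 in
lemma Dphi (D : Derivation ℂ KK KK) (P : Polynomial ℂ) :
    D (phi0 P) = cc2 * D (uu 2) + cc1 P * D (uu 1) + cc0 P * D (uu 0) := by
  have h12 : D (1/2 : KK) = 0 := by simpa using D_q D 1 2
  have h13 : D (1/3 : KK) = 0 := by simpa using D_q D 1 3
  have h23 : D (2/3 : KK) = 0 := by simpa using D_q D 2 3
  simp only [phi0, cc0, cc1, cc2, pev, Function.iterate_zero, Function.iterate_one, id_eq,
    map_add, Derivation.leibniz, Derivation.leibniz_inv, Derivation.map_aeval, smul_eq_mul,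
    h12, h13, h23, mul_zero, zero_mul, add_zero, zero_add]
  ring

set_option maxHeartbeats 2000000 in
set_option synthInstance.maxHeartbeats 1000000 in
lemma main_id (d : Derivation ℂ KK KK) (hd : ∀ n : ℕ, d (uu n) = uu (n + 1)) (P : Polynomial ℂ) :
    (uu 1)⁻¹ * d ((uu 1)⁻¹ * GG1 P) = cc0 P - d (cc1 P) + d (d cc2) := by
  have hu1 : (uu 1 : KK) ≠ 0 := uu_ne_zero 1
  have h32 : d (3/2 : KK) = 0 := by simpa using D_q d 3 2
  have h13 : d (1/3 : KK) = 0 := by simpa using D_q d 1 3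
  have h23 : d (2/3 : KK) = 0 := by simpa using D_q d 2 3
  have hn2 : d (2 : KK) = 0 := by
    rw [show (2 : KK) = ((2 : ℕ) : KK) by norm_num]; exact d.map_natCast 2
  have hn3 : d (3 : KK) = 0 := by
    rw [show (3 : KK) = ((3 : ℕ) : KK) by norm_num]; exact d.map_natCast 3
  have e0 : d (uu 0) = uu 1 := hd 0
  have e1 : d (uu 1) = uu 2 := hd 1
  have e2 : d (uu 2) = uu 3 := hd 2
  have e3 : d (uu 3) = uu 4 := hd 3
  simp only [GG1, cc0, cc1, cc2, pev, Function.iterate_zero, Function.iterate_one, id_eq,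
    div_eq_mul_inv, map_add, map_sub, map_neg, Derivation.leibniz, Derivation.leibniz_inv,
    Derivation.map_aeval, Derivation.leibniz_pow, smul_eq_mul, nsmul_eq_mul,
    h32, h13, h23, hn2, hn3, e0, e1, e2, e3,
    mul_zero, zero_mul, add_zero, zero_add]
  linear_combination ((1/3 : KK) * Polynomial.aeval (uu 0) (Polynomial.derivative P)
    * ((uu 1)⁻¹ * (uu 1)⁻¹)) * mul_inv_cancel₀ hu1

lemma phi0_mem (P : Polynomial ℂ) : phi0 P ∈ VV := by
  have h0 : uu 0 ∈ VV := Algebra.subset_adjoin (Or.inl ⟨0, rfl⟩)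
  have h2 : uu 2 ∈ VV := Algebra.subset_adjoin (Or.inl ⟨2, rfl⟩)
  have hw : (uu 1)⁻¹ ∈ VV := Algebra.subset_adjoin (Or.inr rfl)
  have hpev : pev P 0 ∈ VV := by
    rw [pev, Function.iterate_zero, id_eq]
    have hco := Polynomial.aeval_algHom_apply VV.val (⟨uu 0, h0⟩ : VV) P
    have hmem : (VV.val (Polynomial.aeval (⟨uu 0, h0⟩ : VV) P)) ∈ VV :=
      (Polynomial.aeval (⟨uu 0, h0⟩ : VV) P).2
    rw [← hco] at hmem
    exact hmem
  have h12 : (1/2 : KK) ∈ VV := by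
    have : (1/2 : KK) = algebraMap ℂ KK (1/2) := by
      rw [map_div₀, map_one, map_ofNat]
    rw [this]; exact VV.algebraMap_mem _
  have h13 : (1/3 : KK) ∈ VV := by
    have : (1/3 : KK) = algebraMap ℂ KK (1/3) := by
      rw [map_div₀, map_one, map_ofNat]
    rw [this]; exact VV.algebraMap_mem _
  exact add_mem
    (mul_mem h12 (mul_mem (mul_mem h2 h2) (mul_mem hw hw)))
    (mul_mem h13 (mul_mem hpev (mul_mem hw hw)))


set_option maxHeartbeats 1000000 in
set_option synthInstance.maxHeartbeats 1000000 in
/-- the Krichever–Novikov equation is hamiltonian for H₀: there is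
φ ∈ V with u₁⁻¹·∂(u₁⁻¹·G₁) = δφ/δu, i.e. G₁ = H₀(δφ/δu). -/
theorem statement19
    (d : Derivation ℂ KK KK) (hd : ∀ n : ℕ, d (uu n) = uu (n + 1))
    (X : KK → Derivation ℂ KK KK) (hX : ∀ (F : KK) (n : ℕ), X F (uu n) = (⇑d)^[n] F)
    (DF : KK → ℤ → KK) (hDF : ∀ F : KK, IsDiffOp (DF F))
    (hDF2 : ∀ F G : KK, papply d (DF F) G = X G F)
    (P : Polynomial ℂ) (hP : P.natDegree ≤ 4) :
    ∃ φ ∈ VV, (uu 1)⁻¹ * d ((uu 1)⁻¹ * GG1 P) = vard d DF φ ∧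
      ∃ g : KK, GG1 P = uu 1 * g ∧ d g = uu 1 * vard d DF φ := by
  classical
  have hu1 : (uu 1 : KK) ≠ 0 := uu_ne_zero 1
  obtain ⟨N, hN⟩ := hDF (phi0 P)
  set Nn : ℕ := N.toNat + 3 with hNndef
  have hNn3 : 3 ≤ Nn := by omega
  have hLbig : ∀ n : ℕ, Nn ≤ n → DF (phi0 P) (n : ℤ) = 0 := by
    intro n hn
    apply hN
    right
    have h1 : N ≤ (N.toNat : ℤ) := Int.self_le_toNat N
    omega
  set C : ℕ → KK :=
    fun n => if n = 0 then cc0 P else if n = 1 then cc1 P else if n = 2 then cc2 else 0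
    with hCdef
  have hCbig : ∀ n : ℕ, 3 ≤ n → C n = 0 := by
    intro n hn
    simp only [hCdef]
    rw [if_neg (by omega), if_neg (by omega), if_neg (by omega)]
  have hXm : ∀ m : ℕ, X (uu m) (phi0 P)
      = cc2 * uu (m + 2) + cc1 P * uu (m + 1) + cc0 P * uu m := by
    intro m
    rw [Dphi (X (uu m)) P, hX (uu m) 2, hX (uu m) 1, hX (uu m) 0,
      d_iter_uu d hd 2 m, d_iter_uu d hd 1 m, d_iter_uu d hd 0 m]
    norm_num
  have hLsum : ∀ m : ℕ, ∑ n ∈ Finset.range Nn, DF (phi0 P) (n : ℤ) * uu (m + n)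
      = X (uu m) (phi0 P) := by
    intro m
    rw [← hDF2 (phi0 P) (uu m), papply]
    rw [finsum_eq_finset_sum_of_support_subset _ (s := Finset.range Nn) ?_]
    · exact Finset.sum_congr rfl fun n _ => by rw [d_iter_uu d hd n m]
    · intro n hn
      simp only [Function.mem_support] at hn
      by_contra hc
      apply hn
      have hn3 : Nn ≤ n := by simpa [Finset.mem_range, not_lt] using hc
      rw [hLbig n hn3, zero_mul]
  have hCsum : ∀ m : ℕ, ∑ n ∈ Finset.range Nn, C n * uu (m + n)
      = cc2 * uu (m + 2) + cc1 P * uu (m + 1) + cc0 P * uu m := by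
    intro m
    rw [← Finset.sum_subset (Finset.range_subset_range.mpr hNn3)
      (fun x _ hx => by
        rw [hCbig x (by simpa [Finset.mem_range, not_lt] using hx), zero_mul])]
    rw [Finset.sum_range_succ, Finset.sum_range_succ, Finset.sum_range_succ,
      Finset.sum_range_zero]
    simp only [hCdef]
    norm_num
    ring
  have hLC : ∀ n : ℕ, DF (phi0 P) (n : ℤ) = C n := by
    have hk := key_indep Nn (fun n => DF (phi0 P) (n : ℤ) - C n) (fun m => by
      simp only [sub_mul]
      rw [Finset.sum_sub_distrib, hLsum m, hCsum m, hXm m]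
      ring)
    intro n
    by_cases hn : n < Nn
    · exact sub_eq_zero.mp (hk n (Finset.mem_range.mpr hn))
    · rw [hLbig n (le_of_not_gt hn), hCbig n (by omega)]
  have hL0 : DF (phi0 P) 0 = cc0 P := by simpa [hCdef] using hLC 0
  have hL1 : DF (phi0 P) 1 = cc1 P := by simpa [hCdef] using hLC 1
  have hL2 : DF (phi0 P) 2 = cc2 := by simpa [hCdef] using hLC 2
  have hvard : vard d DF (phi0 P) = cc0 P - d (cc1 P) + d (d cc2) := by
    rw [vard]
    have h1 : papply d (padj d (DF (phi0 P))) 1 = padj d (DF (phi0 P)) 0 := by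
      rw [papply]
      rw [finsum_eq_single _ 0 ?_]
      · simp
      · intro n hn
        obtain ⟨k, rfl⟩ : ∃ k, n = k + 1 := ⟨n - 1, by omega⟩
        rw [Function.iterate_succ_apply, Derivation.map_one_eq_zero, d_iter_zero d k,
          mul_zero]
    rw [h1]
    simp only [padj]
    rw [finsum_eq_finset_sum_of_support_subset _ (s := Finset.range 3) ?_]
    · rw [Finset.sum_range_succ, Finset.sum_range_succ, Finset.sum_range_succ,
        Finset.sum_range_zero]
      norm_num [binc, Finset.prod_range_succ, hL0, hL1, hL2, Nat.factorial]
      ring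
    · intro k hk
      simp only [Function.mem_support] at hk
      by_contra hc
      apply hk
      have hk3 : 3 ≤ k := by simpa [Finset.mem_range, not_lt] using hc
      have hz : DF (phi0 P) ((0 : ℤ) + (k : ℤ)) = 0 := by
        rw [zero_add, hLC k, hCbig k hk3]
      rw [hz, d_iter_zero, mul_zero]
  have hmain : (uu 1)⁻¹ * d ((uu 1)⁻¹ * GG1 P) = vard d DF (phi0 P) := by
    rw [hvard]; exact main_id d hd P
  refine ⟨phi0 P, phi0_mem P, hmain, (uu 1)⁻¹ * GG1 P, ?_, ?_⟩
  · rw [← mul_assoc, mul_inv_cancel₀ hu1, one_mul]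
  · rw [← hmain, ← mul_assoc, mul_inv_cancel₀ hu1, one_mul]
end
end
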